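/- The map sending a ∈ (0,1]^n ∩ (1/k)ℤ^n with order class Φ (an ordered set partition with ℓ blocks) to its block values gives a bijection between lattice points of the k-th dilate of the half-open simplex C(Φ) ∩ (0,1]^n and strictly increasing ℓ-tuples in [k]; hence ehr_{C(Φ)∩(0,1]^n}(k) = C(k, ℓ). -/

import Mathlib

/-- A scheduling problem on `n` items: a boolean formula over atoms `x i ≤ x j`. -/
inductive SForm (n : ℕ) : Type
  | atom (i j : Fin n) : SForm n
  | not (φ : SForm n) : SForm n
  | and (φ ψ : SForm n) : SForm n
  | or (φ ψ : SForm n) : SForm n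

/-- Evaluation of a scheduling formula at an assignment `a : Fin n → ℕ`. -/
def SForm.eval {n : ℕ} : SForm n → (Fin n → ℕ) → Bool
  | .atom i j, a => decide (a i ≤ a j)
  | .not φ, a => !(φ.eval a)
  | .and φ ψ, a => φ.eval a && ψ.eval a
  | .or φ ψ, a => φ.eval a || ψ.eval a

/-- `schedCount S k` = number of vectors `a ∈ [k]^n` (entries in `{1,…,k}`) solving `S`. -/
def schedCount {n : ℕ} (S : SForm n) (k : ℕ) : ℕ :=
  ((Fintype.piFinset fun _ : Fin n => Finset.Icc 1 k).filter
    fun a => S.eval a = true).card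

/-- An ordered set partition of `[n]`. -/
structure OSP (n : ℕ) where
  blocks : List (Finset (Fin n))
  nonempty : ∀ B ∈ blocks, B.Nonempty
  pairwiseDisjoint : blocks.Pairwise Disjoint
  cover : ∀ i : Fin n, ∃ B ∈ blocks, i ∈ B

/-- Number of blocks of an ordered set partition. -/
def OSP.length {n : ℕ} (Φ : OSP n) : ℕ := Φ.blocks.length

/-- `Φ.delta a` : the order class of `a` is `Φ`, i.e. coordinates of `a` are constant on each
block and ordered according to the block order. -/
def OSP.delta {n : ℕ} (Φ : OSP n) (a : Fin n → ℕ) : Prop :=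
  ∃ idx : Fin n → Fin Φ.blocks.length,
    (∀ i, i ∈ Φ.blocks.get (idx i)) ∧
    (∀ i j, a i ≤ a j ↔ (idx i : ℕ) ≤ (idx j : ℕ))

/-- An ordered set partition `Φ` solves `S` if every vector with order class `Φ` satisfies `S`. -/
def OSP.solves {n : ℕ} (Φ : OSP n) (S : SForm n) : Prop :=
  ∀ a : Fin n → ℕ, Φ.delta a → S.eval a = true

/-- `Ψ.refines Φ` : `Φ` is obtained from `Ψ` by merging consecutive blocks. -/
def OSP.refines {n : ℕ} (Ψ Φ : OSP n) : Prop :=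
  ∃ g : Fin Ψ.blocks.length → Fin Φ.blocks.length,
    Monotone g ∧
    ∀ l : Fin Φ.blocks.length,
      Φ.blocks.get l =
        (Finset.univ.filter fun m => g m = l).biUnion fun m => Ψ.blocks.get m

/-- One step of directed refinement: `F` is obtained from `C` by splitting one block into two
adjacent blocks, every element of the first being less than every element of the second. -/
def dirCov {n : ℕ} (C F : OSP n) : Prop :=
  ∃ (L R : List (Finset (Fin n))) (B₁ B₂ : Finset (Fin n)),
    F.blocks = L ++ B₁ :: B₂ :: R ∧
    C.blocks = L ++ (B₁ ∪ B₂) :: R ∧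
    ∀ x ∈ B₁, ∀ y ∈ B₂, x < y

/-- `dirRef C F` : `F` is a directed refinement of `C` (`C ⪯ F`). -/
def dirRef {n : ℕ} : OSP n → OSP n → Prop := Relation.ReflTransGen dirCov

/-!
A point of order class `Φ` is constant on each block, and its block values increase strictly
along `Φ`; conversely every strictly increasing tuple of block values arises this way. Strictly
increasing `ℓ`-tuples in `[k]` are the increasing enumerations of the `ℓ`-subsets of `[k]`.
-/

namespace OSP

variable {n : ℕ} (Φ : OSP n)

theorem eq_of_mem_get_of_mem_get {i : Fin n} {m m' : Fin Φ.blocks.length}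
    (h : i ∈ Φ.blocks.get m) (h' : i ∈ Φ.blocks.get m') : m = m' := by
  have hdisj := List.pairwise_iff_get.mp Φ.pairwiseDisjoint
  rcases lt_trichotomy m m' with hlt | heq | hgt
  · exact absurd h' (Finset.disjoint_left.mp (hdisj m m' hlt) h)
  · exact heq
  · exact absurd h (Finset.disjoint_left.mp (hdisj m' m hgt) h')

theorem exists_mem_get (i : Fin n) : ∃ m : Fin Φ.blocks.length, i ∈ Φ.blocks.get m := by
  obtain ⟨B, hB, hi⟩ := Φ.cover i
  obtain ⟨m, rfl⟩ := List.get_of_mem hB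
  exact ⟨m, hi⟩

noncomputable def blockIdx (i : Fin n) : Fin Φ.blocks.length := (Φ.exists_mem_get i).choose

theorem mem_get_blockIdx (i : Fin n) : i ∈ Φ.blocks.get (Φ.blockIdx i) :=
  (Φ.exists_mem_get i).choose_spec

theorem blockIdx_eq_of_mem {i : Fin n} {m : Fin Φ.blocks.length} (h : i ∈ Φ.blocks.get m) :
    Φ.blockIdx i = m :=
  Φ.eq_of_mem_get_of_mem_get (Φ.mem_get_blockIdx i) h

noncomputable def rep (m : Fin Φ.blocks.length) : Fin n :=
  (Φ.nonempty _ (Φ.blocks.get_mem m)).choose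

theorem blockIdx_rep (m : Fin Φ.blocks.length) : Φ.blockIdx (Φ.rep m) = m :=
  Φ.blockIdx_eq_of_mem (Φ.nonempty _ (Φ.blocks.get_mem m)).choose_spec

theorem delta_iff {a : Fin n → ℕ} :
    Φ.delta a ↔ ∀ i j, a i ≤ a j ↔ Φ.blockIdx i ≤ Φ.blockIdx j := by
  refine ⟨fun ⟨idx, hmem, hord⟩ i j => ?_, fun h => ⟨Φ.blockIdx, Φ.mem_get_blockIdx, h⟩⟩
  rw [hord, Φ.blockIdx_eq_of_mem (hmem i), Φ.blockIdx_eq_of_mem (hmem j), Fin.le_def]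

variable {Φ}

theorem delta.apply_eq_of_blockIdx_eq {a : Fin n → ℕ} (ha : Φ.delta a) {i j : Fin n}
    (hij : Φ.blockIdx i = Φ.blockIdx j) : a i = a j := by
  rw [Φ.delta_iff] at ha
  exact le_antisymm ((ha i j).mpr hij.le) ((ha j i).mpr hij.ge)

theorem delta.strictMono_comp_rep {a : Fin n → ℕ} (ha : Φ.delta a) : StrictMono (a ∘ Φ.rep) :=
  fun m m' hlt => by
    rw [Φ.delta_iff] at ha
    simpa only [Function.comp_apply, ← not_le, ha, Φ.blockIdx_rep] using hlt

theorem delta_comp_blockIdx {v : Fin Φ.blocks.length → ℕ} (hv : StrictMono v) :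
    Φ.delta (v ∘ Φ.blockIdx) :=
  Φ.delta_iff.mpr fun _ _ => hv.le_iff_le

variable (Φ)

noncomputable def blockValuesEquiv (s : Finset ℕ) :
    {a : Fin n → ℕ // (∀ i, a i ∈ s) ∧ Φ.delta a} ≃
      {v : Fin Φ.blocks.length → ℕ // StrictMono v ∧ ∀ m, v m ∈ s} where
  toFun a := ⟨a.1 ∘ Φ.rep, a.2.2.strictMono_comp_rep, fun _ => a.2.1 _⟩
  invFun v := ⟨v.1 ∘ Φ.blockIdx, fun _ => v.2.2 _, delta_comp_blockIdx v.2.1⟩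
  left_inv a := Subtype.ext <| funext fun _ =>
    a.2.2.apply_eq_of_blockIdx_eq (Φ.blockIdx_rep _)
  right_inv v := Subtype.ext <| funext fun m => congrArg v.1 (Φ.blockIdx_rep m)

theorem blockValuesEquiv_apply_of_mem (s : Finset ℕ)
    (a : {a : Fin n → ℕ // (∀ i, a i ∈ s) ∧ Φ.delta a}) {m : Fin Φ.blocks.length} {i : Fin n}
    (h : i ∈ Φ.blocks.get m) : (Φ.blockValuesEquiv s a).1 m = a.1 i :=
  a.2.2.apply_eq_of_blockIdx_eq ((Φ.blockIdx_rep m).trans (Φ.blockIdx_eq_of_mem h).symm)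

end OSP

namespace Finset

variable {α : Type*} [LinearOrder α]

noncomputable def strictMonoEquivPowersetCard (s : Finset α) (ℓ : ℕ) :
    {v : Fin ℓ → α // StrictMono v ∧ ∀ m, v m ∈ s} ≃ s.powersetCard ℓ where
  toFun v := ⟨univ.image v.1, mem_powersetCard.mpr
    ⟨image_subset_iff.mpr fun m _ => v.2.2 m, by
      rw [card_image_of_injective _ v.2.1.injective, card_univ, Fintype.card_fin]⟩⟩
  invFun t := ⟨t.1.orderEmbOfFin (mem_powersetCard.mp t.2).2, (orderEmbOfFin _ _).strictMono,
    fun m => (mem_powersetCard.mp t.2).1 (orderEmbOfFin_mem _ _ m)⟩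
  left_inv v := Subtype.ext (orderEmbOfFin_unique _ (fun m => mem_image_of_mem _ (mem_univ m))
    v.2.1).symm
  right_inv t := Subtype.ext (image_orderEmbOfFin_univ _ _)

theorem card_strictMono_forall_mem (s : Finset α) (ℓ : ℕ) :
    Nat.card {v : Fin ℓ → α // StrictMono v ∧ ∀ m, v m ∈ s} = s.card.choose ℓ := by
  rw [Nat.card_congr (s.strictMonoEquivPowersetCard ℓ), Nat.card_eq_fintype_card,
    Fintype.card_coe, card_powersetCard]

end Finset

/-- sending a lattice point of the `k`-th dilate of the half-open simplex
`C(Φ) ∩ (0,1]^n` (i.e. an `a ∈ [k]^n` with order class `Φ`) to its block values is a bijection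
onto the strictly increasing `ℓ`-tuples in `[k]`; hence the Ehrhart function is `C(k,ℓ)`. -/
theorem ehrhart_braid_cone {n ℓ : ℕ} (Φ : OSP n) (hl : Φ.blocks.length = ℓ) (k : ℕ) :
    (∃ e : {a : Fin n → ℕ // (∀ i, a i ∈ Finset.Icc 1 k) ∧ Φ.delta a} ≃
        {v : Fin ℓ → ℕ // StrictMono v ∧ ∀ m, v m ∈ Finset.Icc 1 k},
      ∀ a, ∀ m : Fin ℓ, ∀ i : Fin n,
        i ∈ Φ.blocks.get (Fin.cast hl.symm m) → (e a : Fin ℓ → ℕ) m = (a : Fin n → ℕ) i) ∧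
    {a : Fin n → ℕ | (∀ i, a i ∈ Finset.Icc 1 k) ∧ Φ.delta a}.ncard = k.choose ℓ := by
  subst hl
  refine ⟨⟨Φ.blockValuesEquiv _, fun a m i h => Φ.blockValuesEquiv_apply_of_mem _ a h⟩, ?_⟩
  rw [← Nat.card_coe_set_eq, Set.coe_ofPred, Nat.card_congr (Φ.blockValuesEquiv _),
    Finset.card_strictMono_forall_mem, Nat.card_Icc, Nat.add_sub_cancel]
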